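/- Fix a k-anxious root of unity α and let m be the smallest positive integer such that α^{k^m} = α. Let (c_1,…,c_n) be rational functions, j_0 ∈ ℕ, and let (c̃_i) = (z − α^{k^{j_0}})*(c_i), i.e. c̃_i(z) = ((z^{k^i} − α^{k^{j_0}})/(z − α^{k^{j_0}})) · c_i(z). Then for all j ≥ 0 and 1 ≤ i ≤ n: v_{α^{k^j}}(c̃_i) = v_{α^{k^j}}(c_i) − 1 if j ≡ j_0 (mod m) and i ≢ j_0 − j (mod m); v_{α^{k^j}}(c̃_i) = v_{α^{k^j}}(c_i) + 1 if i ≡ j_0 − j (mod m) and j ≢ j_0 (mod m); and v_{α^{k^j}}(c̃_i) = v_{α^{k^j}}(c_i) otherwise (with the convention +∞ ± 1 = +∞ when c_i = 0). -/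

import Mathlib

open Polynomial

attribute [local instance] Classical.propDecidable

noncomputable section

variable {K : Type*} [Field K]

/-- Integer order of vanishing of a rational function at `α` (junk value `0` for `c = 0`). -/
def vInt (α : K) (c : RatFunc K) : ℤ :=
  (c.num.rootMultiplicity α : ℤ) - (c.denom.rootMultiplicity α : ℤ)

/-- The `(z - α)`-adic valuation on `K(z)`, with `vAt α 0 = ⊤`. -/
def vAt (α : K) (c : RatFunc K) : WithTop ℤ :=
  if c = 0 then ⊤ else (vInt α c : WithTop ℤ)

/-- Substitution `z ↦ z^i` in a rational function. -/
def substPow (i : ℕ) (c : RatFunc K) : RatFunc K :=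
  RatFunc.eval (algebraMap K (RatFunc K)) (RatFunc.X ^ i) c

/-- A polynomial viewed as a rational function. -/
def toRat (p : Polynomial K) : RatFunc K := algebraMap (Polynomial K) (RatFunc K) p

/-- A rational function is a polynomial. -/
def IsPolyFun (c : RatFunc K) : Prop := ∃ p : Polynomial K, c = toRat p

def IsRootOfUnity (α : K) : Prop := ∃ m : ℕ, 0 < m ∧ α ^ m = 1

/-- `α` is `k`-calm: zero, or a root of unity whose order is not coprime to `k`. -/
def IsCalmNum (k : ℕ) (α : K) : Prop :=
  α = 0 ∨ (0 < orderOf α ∧ ¬ Nat.Coprime (orderOf α) k)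

def IsAnxious (k : ℕ) (α : K) : Prop := ¬ IsCalmNum k α

/-- A rational function is `k`-calm: no poles at `k`-anxious numbers. -/
def IsCalmFun (k : ℕ) (c : RatFunc K) : Prop :=
  ∀ α : K, IsAnxious k α → 0 ≤ vAt α c

/-- Action of a rational function `h` on a finite sequence `(c_1, …, c_n)`;
the index `i : Fin n` stands for the 1-based index `i+1`. -/
def act (k : ℕ) (h : RatFunc K) {n : ℕ} (c : Fin n → RatFunc K) : Fin n → RatFunc K :=
  fun i => substPow (k ^ (i.1 + 1)) h / h * c i

def IsPrecalmSeq (k : ℕ) {n : ℕ} (c : Fin n → RatFunc K) : Prop :=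
  ∃ h : Polynomial K, h ≠ 0 ∧ ∀ i, IsCalmFun k (act k (toRat h) c i)

/-- Partial sums `ā_i = a_0 + … + a_{i-1}` of an infinite sequence with values in `{1,…,n}`. -/
def abarInf {n : ℕ} (a : ℕ → Fin n) (i : ℕ) : ℕ :=
  ∑ j ∈ Finset.range i, ((a j).1 + 1)

/-- Partial sums for a finite sequence (a list). -/
def abarList {n : ℕ} (l : List (Fin n)) (i : ℕ) : ℕ :=
  ((l.take i).map (fun j => j.1 + 1)).sum

/-- Full sum `ā_μ` of a finite sequence. -/
def barSum {n : ℕ} (l : List (Fin n)) : ℕ := (l.map (fun j => j.1 + 1)).sum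

/-- Calmness w.r.t. an anxious `α` that is not a root of unity and an infinite sequence. -/
def clmInf (k : ℕ) (α : K) {n : ℕ} (c : Fin n → RatFunc K) (a : ℕ → Fin n) : WithTop ℤ :=
  if ∃ i, c (a i) = 0 then ⊤
  else ((∑ᶠ i : ℕ, vInt (α ^ k ^ abarInf a i) (c (a i)) : ℤ) : WithTop ℤ)

/-- Calmness w.r.t. an anxious root of unity `α` and a finite sequence. -/
def clmList (k : ℕ) (α : K) {n : ℕ} (c : Fin n → RatFunc K) (l : List (Fin n)) : WithTop ℤ :=
  ∑ i : Fin l.length, vAt (α ^ k ^ abarList l i.1) (c (l.get i))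

/-- Calmness of a single rational function w.r.t. an anxious `α`. -/
def clmOne (k : ℕ) (α : K) (c : RatFunc K) : WithTop ℤ :=
  if hμ : ∃ μ : ℕ, 0 < μ ∧ α ^ k ^ μ = α then
    ∑ i ∈ Finset.range (Nat.find hμ), vAt (α ^ k ^ i) c
  else if c = 0 then ⊤
  else ((∑ᶠ i : ℕ, vInt (α ^ k ^ i) c : ℤ) : WithTop ℤ)

/-- The `k`-kernel of a sequence. -/
def kernelSet (k : ℕ) (a : ℕ → K) : Set (ℕ → K) :=
  { b | ∃ e r : ℕ, r < k ^ e ∧ b = fun i => a (k ^ e * i + r) }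

/-- `k`-regularity of a formal power series. -/
def IsRegularSeries (k : ℕ) (f : PowerSeries K) : Prop :=
  FiniteDimensional K (Submodule.span K (kernelSet k (fun i => PowerSeries.coeff (R := K) i f)))

/-- Cartier operator `Λ_{k,r}`. -/
def cartier (k r : ℕ) (f : PowerSeries K) : PowerSeries K :=
  PowerSeries.mk fun i => PowerSeries.coeff (R := K) (k * i + r) f

/-- Substitution `z ↦ z^m` in a power series (for `m ≥ 1`). -/
def psSubstPow (m : ℕ) (f : PowerSeries K) : PowerSeries K :=
  PowerSeries.mk fun i => if m ∣ i then PowerSeries.coeff (R := K) (i / m) f else 0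

/-- `f` satisfies the Mahler equation `f(z) = Σ_{i=1}^n c_i(z) f(z^{k^i})`. -/
def SatisfiesMahler (k : ℕ) {n : ℕ} (c : Fin n → RatFunc K) (f : PowerSeries K) : Prop :=
  ∃ (q : Polynomial K) (p : Fin n → Polynomial K), q ≠ 0 ∧
    (∀ i, toRat q * c i = toRat (p i)) ∧
    (q : PowerSeries K) * f = ∑ i : Fin n, ((p i : PowerSeries K) * psSubstPow (k ^ (i.1 + 1)) f)


/-- Substitution `z ↦ z^m` in a formal Laurent series (for `m ≥ 1`). -/
def lsSubstPow (m : ℕ) (g : LaurentSeries K) : LaurentSeries K :=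
  if h : 0 < m then
    HahnSeries.embDomain
      (OrderEmbedding.ofStrictMono (fun n : ℤ => (m : ℤ) * n)
        (fun a b hab => by
          exact mul_lt_mul_of_pos_left hab (by exact_mod_cast h))) g
  else 0

/-- A Laurent series `g` satisfies the Mahler equation `g(z) = Σ_{i=1}^n b_i(z) g(z^{k^i})`
with polynomial coefficients. -/
def SatisfiesMahlerPolyLS (k : ℕ) {n : ℕ} (b : Fin n → Polynomial K) (g : LaurentSeries K) : Prop :=
  g = ∑ i : Fin n, (((b i : PowerSeries K) : LaurentSeries K) * lsSubstPow (k ^ (i.1 + 1)) g)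

/-- Coefficients `d_{i,m}` of the special operators associated to `(c_1, …, c_n)`:
`dCoef k c m i` is `d_{i,m}`, with value `0` outside the range `1 ≤ i ≤ m + n`. -/
def dCoef (k : ℕ) {n : ℕ} (c : Fin n → RatFunc K) : ℕ → ℕ → RatFunc K
  | 0 => fun i => if h : 1 ≤ i ∧ i ≤ n then c ⟨i - 1, by omega⟩ else 0
  | m + 1 => fun i =>
      if _h1 : i ≤ m then dCoef k c m i
      else if _h2 : i = m + 1 then 0
      else if h3 : i ≤ m + 1 + n then
        dCoef k c m i + dCoef k c m (m + 1) * substPow (k ^ (m + 1)) (c ⟨i - m - 2, by omega⟩)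
      else 0

end

/-! `(z^{k^i} - γ)/(z - γ)` with `γ = α^{k^{j₀}}` shifts the valuation at `β = α^{k^j}` by
`[β^{k^i} = γ] - [β = γ]`: both polynomials are separable, as `k` is invertible in `K` and
`γ ≠ 0`. Since `α` is a periodic point of `x ↦ x^k` of exact period `m`, `α^{k^a} = α^{k^b}`
iff `a ≡ b (mod m)`, which turns the two conditions into `i + j ≡ j₀` and `j ≡ j₀`. -/

theorem Function.iterate_eq_iterate_iff_modEq {X : Type*} {f : X → X} {x : X}
    (hx : x ∈ Function.periodicPts f) (a b : ℕ) :
    f^[a] x = f^[b] x ↔ a ≡ b [MOD Function.minimalPeriod f x] := by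
  have hpos := Function.minimalPeriod_pos_of_mem_periodicPts hx
  rw [← Function.iterate_mod_minimalPeriod_eq, ← Function.iterate_mod_minimalPeriod_eq (n := b),
    Function.iterate_eq_iterate_iff_of_lt_minimalPeriod (Nat.mod_lt _ hpos) (Nat.mod_lt _ hpos)]
  rfl

theorem pow_pow_eq_pow_pow_iff_modEq {M : Type*} [Monoid M] {k m : ℕ} {α : M} (hm : 0 < m)
    (hmfix : α ^ k ^ m = α) (hmin : ∀ m' : ℕ, 0 < m' → α ^ k ^ m' = α → m ≤ m') (a b : ℕ) :
    α ^ k ^ a = α ^ k ^ b ↔ a ≡ b [MOD m] := by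
  have hper : Function.IsPeriodicPt (· ^ k) m α := by
    simpa [Function.IsPeriodicPt, Function.IsFixedPt, pow_iterate] using hmfix
  have hmem : α ∈ Function.periodicPts (· ^ k) := ⟨m, hm, hper⟩
  have hperiod : Function.minimalPeriod (· ^ k) α = m := by
    refine le_antisymm (hper.minimalPeriod_le hm)
      (hmin _ (Function.minimalPeriod_pos_of_mem_periodicPts hmem) ?_)
    simpa only [pow_iterate] using Function.iterate_minimalPeriod (f := (· ^ k)) (x := α)
  simpa [pow_iterate, hperiod] using Function.iterate_eq_iterate_iff_modEq hmem a b

section Valuation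

variable {K : Type*} [Field K]

theorem natCast_ne_zero_of_forall_charP_not_dvd {k : ℕ} (hk : k ≠ 0)
    (hch : ∀ p : ℕ, p.Prime → CharP K p → ¬ p ∣ k) : (k : K) ≠ 0 := by
  intro h
  have hdvd := (CharP.cast_eq_zero_iff K (ringChar K) k).mp h
  rcases CharP.char_is_prime_or_zero K (ringChar K) with hp | hp
  · exact hch _ hp (ringChar.charP K) hdvd
  · exact hk (Nat.eq_zero_of_zero_dvd (hp ▸ hdvd))

theorem rootMultiplicity_X_pow_sub_C {e : ℕ} {γ : K} (he : (e : K) ≠ 0) (hγ : γ ≠ 0) (β : K) :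
    (X ^ e - C γ).rootMultiplicity β = if β ^ e = γ then 1 else 0 := by
  have hne : X ^ e - C γ ≠ 0 :=
    X_pow_sub_C_ne_zero (Nat.pos_of_ne_zero fun h => he (by simp [h])) γ
  split_ifs with hβ
  · have hpos := (rootMultiplicity_pos hne (x := β)).mpr (by simp [IsRoot, hβ])
    have hle := rootMultiplicity_le_one_of_separable (separable_X_pow_sub_C γ he hγ) β
    omega
  · exact rootMultiplicity_eq_zero (by simpa [IsRoot, sub_eq_zero] using hβ)

theorem vInt_mul (β : K) {c d : RatFunc K} (hc : c ≠ 0) (hd : d ≠ 0) :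
    vInt β (c * d) = vInt β c + vInt β d := by
  have hdd : c.denom * d.denom ≠ 0 :=
    mul_ne_zero (RatFunc.denom_ne_zero c) (RatFunc.denom_ne_zero d)
  have hnn : c.num * d.num ≠ 0 := mul_ne_zero (RatFunc.num_ne_zero hc) (RatFunc.num_ne_zero hd)
  have hcd : c * d ≠ 0 := mul_ne_zero hc hd
  have hcross : (c * d).num * (c.denom * d.denom) = (c.num * d.num) * (c * d).denom := by
    rw [RatFunc.num_mul_eq_mul_denom_iff hdd, map_mul, map_mul, ← div_mul_div_comm,
      RatFunc.num_div_denom, RatFunc.num_div_denom]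
  have hmult := congrArg (rootMultiplicity β) hcross
  rw [rootMultiplicity_mul (mul_ne_zero (RatFunc.num_ne_zero hcd) hdd),
    rootMultiplicity_mul (mul_ne_zero hnn (RatFunc.denom_ne_zero _)),
    rootMultiplicity_mul hdd, rootMultiplicity_mul hnn] at hmult
  unfold vInt
  omega

theorem vInt_toRat (β : K) (p : K[X]) : vInt β (toRat p) = p.rootMultiplicity β := by
  simp [vInt, toRat, RatFunc.num_algebraMap, RatFunc.denom_algebraMap,
    rootMultiplicity_eq_zero (p := (1 : K[X])) (x := β) (by simp)]

theorem vInt_toRat_div_toRat {p q : K[X]} (hp : p ≠ 0) (hq : q ≠ 0) (β : K) :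
    vInt β (toRat p / toRat q) = p.rootMultiplicity β - q.rootMultiplicity β := by
  have hp' : toRat p ≠ 0 := RatFunc.algebraMap_ne_zero hp
  have hq' : toRat q ≠ 0 := RatFunc.algebraMap_ne_zero hq
  have h := vInt_mul β (div_ne_zero hp' hq') hq'
  rw [show toRat p / toRat q * toRat q = toRat p from div_mul_cancel₀ _ hq', vInt_toRat,
    vInt_toRat] at h
  omega

theorem vAt_toRat_div_toRat_mul {p q : K[X]} (hp : p ≠ 0) (hq : q ≠ 0) (β : K)
    (c : RatFunc K) :
    vAt β (toRat p / toRat q * c)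
      = (vAt β c).map (· + ((p.rootMultiplicity β : ℤ) - q.rootMultiplicity β)) := by
  by_cases hc : c = 0
  · simp [vAt, hc]
  have hpq : toRat p / toRat q ≠ 0 :=
    div_ne_zero (RatFunc.algebraMap_ne_zero hp) (RatFunc.algebraMap_ne_zero hq)
  rw [vAt, vAt, if_neg (mul_ne_zero hpq hc), if_neg hc, WithTop.map_coe, vInt_mul β hpq hc,
    vInt_toRat_div_toRat hp hq, add_comm]

theorem substPow_toRat_X_sub_C (e : ℕ) (γ : K) :
    substPow e (toRat (X - C γ)) = toRat (X ^ e - C γ) := by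
  simp only [substPow, toRat]
  rw [RatFunc.eval_algebraMap]
  simp

theorem vAt_act_X_sub_C {k : ℕ} (hk : (k : K) ≠ 0) {γ : K} (hγ : γ ≠ 0) {n : ℕ}
    (c : Fin n → RatFunc K) (i : Fin n) (β : K) :
    vAt β (act k (toRat (X - C γ)) c i)
      = (vAt β (c i)).map
          (· + ((if β ^ k ^ (i.1 + 1) = γ then 1 else 0) - (if β = γ then 1 else 0))) := by
  have he : ((k ^ (i.1 + 1) : ℕ) : K) ≠ 0 := by
    rw [Nat.cast_pow]
    exact pow_ne_zero _ hk
  have hpos : 0 < k ^ (i.1 + 1) := Nat.pos_of_ne_zero fun h => he (by simp [h])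
  rw [act, substPow_toRat_X_sub_C,
    vAt_toRat_div_toRat_mul (X_pow_sub_C_ne_zero hpos γ) (X_sub_C_ne_zero γ),
    rootMultiplicity_X_pow_sub_C he hγ, rootMultiplicity_X_sub_C]
  push_cast
  rfl

end Valuation

theorem stmt10_general {K : Type*} [Field K] (k : ℕ) (hk : 2 ≤ k)
    (hch : ∀ p : ℕ, p.Prime → CharP K p → ¬ p ∣ k)
    (α : K) (hα : IsAnxious k α)
    (m : ℕ) (hm : 0 < m) (hmfix : α ^ k ^ m = α)
    (hmin : ∀ m' : ℕ, 0 < m' → α ^ k ^ m' = α → m ≤ m')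
    {n : ℕ} (c : Fin n → RatFunc K) (j₀ : ℕ) (j : ℕ) (i : Fin n) :
    ((j ≡ j₀ [MOD m]) ∧ ¬ (i.1 + 1 + j ≡ j₀ [MOD m]) →
      vAt (α ^ k ^ j) (act k (toRat (Polynomial.X - Polynomial.C (α ^ k ^ j₀))) c i)
        = (vAt (α ^ k ^ j) (c i)).map (fun x => x - 1)) ∧
    ((i.1 + 1 + j ≡ j₀ [MOD m]) ∧ ¬ (j ≡ j₀ [MOD m]) →
      vAt (α ^ k ^ j) (act k (toRat (Polynomial.X - Polynomial.C (α ^ k ^ j₀))) c i)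
        = (vAt (α ^ k ^ j) (c i)).map (fun x => x + 1)) ∧
    (¬ ((j ≡ j₀ [MOD m]) ∧ ¬ (i.1 + 1 + j ≡ j₀ [MOD m])) →
     ¬ ((i.1 + 1 + j ≡ j₀ [MOD m]) ∧ ¬ (j ≡ j₀ [MOD m])) →
      vAt (α ^ k ^ j) (act k (toRat (Polynomial.X - Polynomial.C (α ^ k ^ j₀))) c i)
        = vAt (α ^ k ^ j) (c i)) := by
  have hα0 : α ≠ 0 := fun h => hα (Or.inl h)
  have hkK : (k : K) ≠ 0 := natCast_ne_zero_of_forall_charP_not_dvd (by omega) hch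
  have hperiod := pow_pow_eq_pow_pow_iff_modEq hm hmfix hmin
  have hshift : (α ^ k ^ j) ^ k ^ (i.1 + 1) = α ^ k ^ j₀ ↔ i.1 + 1 + j ≡ j₀ [MOD m] := by
    rw [← pow_mul, ← pow_add, hperiod, add_comm]
  rw [vAt_act_X_sub_C hkK (pow_ne_zero _ hα0), hshift, hperiod]
  by_cases hj : j ≡ j₀ [MOD m] <;> by_cases hi : i.1 + 1 + j ≡ j₀ [MOD m] <;>
    simp [hj, hi, sub_eq_add_neg] <;> exact congrFun WithTop.map_id _

theorem stmt10 {K : Type*} [Field K] [IsAlgClosed K] (k : ℕ) (hk : 2 ≤ k)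
    (hch : ∀ p : ℕ, p.Prime → CharP K p → ¬ p ∣ k)
    (α : K) (hα : IsAnxious k α) (hru : IsRootOfUnity α)
    (m : ℕ) (hm : 0 < m) (hmfix : α ^ k ^ m = α)
    (hmin : ∀ m' : ℕ, 0 < m' → α ^ k ^ m' = α → m ≤ m')
    {n : ℕ} (c : Fin n → RatFunc K) (j₀ : ℕ) (j : ℕ) (i : Fin n) :
    ((j ≡ j₀ [MOD m]) ∧ ¬ (i.1 + 1 + j ≡ j₀ [MOD m]) →
      vAt (α ^ k ^ j) (act k (toRat (Polynomial.X - Polynomial.C (α ^ k ^ j₀))) c i)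
        = (vAt (α ^ k ^ j) (c i)).map (fun x => x - 1)) ∧
    ((i.1 + 1 + j ≡ j₀ [MOD m]) ∧ ¬ (j ≡ j₀ [MOD m]) →
      vAt (α ^ k ^ j) (act k (toRat (Polynomial.X - Polynomial.C (α ^ k ^ j₀))) c i)
        = (vAt (α ^ k ^ j) (c i)).map (fun x => x + 1)) ∧
    (¬ ((j ≡ j₀ [MOD m]) ∧ ¬ (i.1 + 1 + j ≡ j₀ [MOD m])) →
     ¬ ((i.1 + 1 + j ≡ j₀ [MOD m]) ∧ ¬ (j ≡ j₀ [MOD m])) →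
      vAt (α ^ k ^ j) (act k (toRat (Polynomial.X - Polynomial.C (α ^ k ^ j₀))) c i)
        = vAt (α ^ k ^ j) (c i)) :=
  stmt10_general k hk hch α hα m hm hmfix hmin c j₀ j i
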